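/- arXiv:math/0203111 — 2 statements merged into one kernel-verified Lean document; each statement's English description precedes it below -/
import Mathlib

section
/- For every integer m ≥ 0, Q_m(q) = (1/(q;q)_∞) Σ_{j≥1} (−1)^{j−1} q^{j(3j−1)/2 + mj}. -/
namespace Dyson

/-- The rank of a partition: largest part minus number of parts. -/
def rank {n : ℕ} (π : n.Partition) : ℤ :=
  (π.parts.sup : ℤ) - π.parts.card

/-- The Euler product `(q;q)_∞`. -/
noncomputable def euler (q : ℝ) : ℝ := ∏' j : ℕ, (1 - q ^ (j + 1))

/-- `Q_m(q)`: generating function for nonempty partitions of rank ≥ m. -/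
noncomputable def Q (q : ℝ) (m : ℤ) : ℝ :=
  ∑' n : ℕ, (Nat.card {π : (n + 1).Partition // m ≤ rank π} : ℝ) * q ^ (n + 1)

noncomputable def qPoch (q : ℝ) (n : ℕ) : ℝ := ∏ j ∈ Finset.range n, (1 - q ^ (j + 1))

noncomputable def qbinom (q : ℝ) (a b : ℤ) : ℝ :=
  if 0 ≤ b ∧ b ≤ a then qPoch q a.toNat / (qPoch q b.toNat * qPoch q (a - b).toNat) else 0

noncomputable def QL (q : ℝ) (m L : ℤ) : ℝ :=
  ∑' n : ℕ,
    (Nat.card {π : (n + 1).Partition // m ≤ rank π ∧ (π.parts.sup : ℤ) ≤ L} : ℝ) * q ^ (n + 1)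

def partAt {n : ℕ} (π : n.Partition) (j : ℕ) : ℕ :=
  ((π.parts.sort (· ≤ ·)).reverse.getD j 0)

def inRankSet {n : ℕ} (π : n.Partition) (k : ℤ) : Prop :=
  ∃ j : ℕ, (j : ℤ) - partAt π (j + 1) = k

noncomputable def G (q : ℝ) (k : ℤ) : ℝ :=
  ∑' n : ℕ, (Nat.card {π : n.Partition // inRankSet π k} : ℝ) * q ^ n

def crank {n : ℕ} (π : n.Partition) : ℤ :=
  if π.parts.count 1 = 0 then (π.parts.sup : ℤ)
  else ((π.parts.filter (fun p => π.parts.count 1 < p)).card : ℤ) - π.parts.count 1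

/-!
Dyson's map (delete the largest part `L`, add `1` to each of the remaining `ℓ - 1` parts and
append `L - m - ℓ` parts equal to `1`) is a bijection from the partitions of `n + m + 1` with
rank `≥ m` onto the partitions of `n` with rank `≤ m + 2`. Counting the complement gives
`N(≥ m, n + m + 1) = p(n) - N(≥ m + 3, n)`, i.e. `Q_m = q^(m+1) (P - Q_(m+3))`, where
`P = ∑ p(n) qⁿ = 1/(q;q)_∞` by Euler (the limit of the same identity for partitions into parts
`≤ N`). Since `pentagonalExp m (j + 1) = pentagonalExp (m + 3) j + m + 1`, the series
`S_m = ∑ⱼ (-1)ʲ q^(pentagonalExp m j)` satisfies `S_m = q^(m+1) (1 - S_(m+3))`. Hence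
`D_m = Q_m - P S_m` is bounded with `|D_m| ≤ |q| |D_(m+3)|`, and iterating forces `D_m = 0`.
-/

open Multiset

lemma sup_mem_of_ne_zero {α : Type*} [LinearOrder α] [OrderBot α] {s : Multiset α} (hs : s ≠ 0) :
    s.sup ∈ s := by
  obtain ⟨y, hy, hmax⟩ := s.exists_max_image id hs
  rwa [le_antisymm (Multiset.sup_le.2 hmax) (le_sup hy)]

def addFirstColumn (s : Multiset ℕ) (k : ℕ) : Multiset ℕ :=
  s.map (· + 1) + replicate k 1

def dropFirstColumn (s : Multiset ℕ) : Multiset ℕ :=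
  (s.filter (· ≠ 1)).map (· - 1)

section Columns

variable {s : Multiset ℕ} {k x : ℕ}

lemma card_addFirstColumn : card (addFirstColumn s k) = card s + k := by
  simp [addFirstColumn]

lemma sum_addFirstColumn : (addFirstColumn s k).sum = s.sum + card s + k := by
  simp [addFirstColumn, sum_map_add]

lemma pos_of_mem_addFirstColumn (hx : x ∈ addFirstColumn s k) : 0 < x := by
  simp only [addFirstColumn, mem_add, mem_map, mem_replicate] at hx
  omega

lemma le_sup_add_one_of_mem_addFirstColumn (hx : x ∈ addFirstColumn s k) : x ≤ s.sup + 1 := by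
  simp only [addFirstColumn, mem_add, mem_map, mem_replicate] at hx
  rcases hx with ⟨a, ha, rfl⟩ | ⟨-, rfl⟩
  · exact Nat.succ_le_succ (le_sup ha)
  · omega

lemma dropFirstColumn_addFirstColumn (hs : 0 ∉ s) :
    dropFirstColumn (addFirstColumn s k) = s := by
  have : (s.map (· + 1)).filter (· ≠ 1) = s.map (· + 1) :=
    filter_eq_self.2 fun x hx => by
      obtain ⟨a, ha, rfl⟩ := mem_map.1 hx
      rintro h
      exact hs (by rwa [show a = 0 by omega] at ha)
  simp only [dropFirstColumn, addFirstColumn, filter_add, this, map_add, map_map]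
  simpa using fun a => eq_of_mem_replicate

lemma addFirstColumn_dropFirstColumn (hs : 0 ∉ s) :
    addFirstColumn (dropFirstColumn s) (s.count 1) = s := by
  have : ((s.filter (· ≠ 1)).map (· - 1)).map (· + 1) = s.filter (· ≠ 1) := by
    rw [map_map]
    refine (map_congr rfl fun x hx => ?_).trans (map_id _)
    obtain ⟨hxs, -⟩ := mem_filter.1 hx
    have : x ≠ 0 := fun h => hs (h ▸ hxs)
    simp only [Function.comp_apply, id]
    omega
  rw [addFirstColumn, dropFirstColumn, this, ← filter_eq', add_comm]
  exact filter_add_not _ _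

lemma sum_dropFirstColumn_add_card (hs : 0 ∉ s) :
    (dropFirstColumn s).sum + card s = s.sum := by
  have hsum := congrArg sum (addFirstColumn_dropFirstColumn hs)
  have hcard := congrArg card (addFirstColumn_dropFirstColumn hs)
  rw [sum_addFirstColumn] at hsum
  rw [card_addFirstColumn] at hcard
  omega

end Columns

lemma zero_notMem_parts {n : ℕ} (π : n.Partition) : 0 ∉ π.parts :=
  fun h => (π.parts_pos h).false

lemma sup_mem_parts {n : ℕ} (π : n.Partition) (hn : n ≠ 0) : π.parts.sup ∈ π.parts :=
  sup_mem_of_ne_zero fun h => hn (by simpa [h] using π.parts_sum.symm)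

lemma rank_lt {n : ℕ} (π : n.Partition) (hn : n ≠ 0) : rank π < n := by
  have hsup := sup_mem_parts π hn
  have := Nat.Partition.le_of_mem_parts hsup
  have := card_pos_iff_exists_mem.2 ⟨_, hsup⟩
  unfold rank
  omega

section DysonMap

variable {m n : ℕ}

def dysonMap (π : (n + m + 1).Partition) (hπ : (m : ℤ) ≤ rank π) : n.Partition where
  parts := addFirstColumn (π.parts.erase π.parts.sup) (π.parts.sup - (m + card π.parts))
  parts_pos := pos_of_mem_addFirstColumn
  parts_sum := by
    have hsup := sup_mem_parts π (Nat.succ_ne_zero _)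
    have := sum_erase hsup
    have := card_erase_add_one hsup
    rw [sum_addFirstColumn, π.parts_sum] at *
    unfold rank at hπ
    omega

def dysonMapInv (m : ℕ) (σ : n.Partition) : (n + m + 1).Partition where
  parts := (card σ.parts + m + 1) ::ₘ dropFirstColumn σ.parts
  parts_pos {x} hx := by
    simp only [dropFirstColumn, mem_cons, mem_map, mem_filter] at hx
    rcases hx with rfl | ⟨a, ⟨ha, ha1⟩, rfl⟩
    · omega
    · have := σ.parts_pos ha
      omega
  parts_sum := by
    have := sum_dropFirstColumn_add_card (zero_notMem_parts σ)
    rw [sum_cons, σ.parts_sum] at *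
    omega

lemma rank_dysonMap_le (π : (n + m + 1).Partition) (hπ : (m : ℤ) ≤ rank π) :
    rank (dysonMap π hπ) ≤ m + 2 := by
  have hsup := sup_mem_parts π (Nat.succ_ne_zero _)
  have := card_erase_add_one hsup
  have : (dysonMap π hπ).parts.sup ≤ π.parts.sup + 1 :=
    Multiset.sup_le.2 fun _ hx => (le_sup_add_one_of_mem_addFirstColumn hx).trans
      (Nat.succ_le_succ (sup_mono fun _ => mem_of_mem_erase))
  have : card (dysonMap π hπ).parts = _ := card_addFirstColumn
  unfold rank at *
  omega

lemma le_rank_dysonMapInv (σ : n.Partition) : (m : ℤ) ≤ rank (dysonMapInv m σ) := by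
  have : card σ.parts + m + 1 ≤ (dysonMapInv m σ).parts.sup := le_sup (mem_cons_self _ _)
  have : card (dropFirstColumn σ.parts) ≤ card σ.parts := by
    simpa [dropFirstColumn] using card_le_card (filter_le _ _)
  simp only [rank, dysonMapInv, card_cons] at *
  omega

lemma sup_dysonMapInv {σ : n.Partition} (hσ : rank σ ≤ m + 2) :
    (dysonMapInv m σ).parts.sup = card σ.parts + m + 1 := by
  refine le_antisymm (Multiset.sup_le.2 fun x hx => ?_) (le_sup (mem_cons_self _ _))
  simp only [dysonMapInv, dropFirstColumn, mem_cons, mem_map, mem_filter] at hx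
  rcases hx with rfl | ⟨a, ⟨ha, -⟩, rfl⟩
  · rfl
  · have := le_sup ha
    unfold rank at hσ
    omega

lemma dysonMapInv_dysonMap (π : (n + m + 1).Partition) (hπ : (m : ℤ) ≤ rank π) :
    dysonMapInv m (dysonMap π hπ) = π := by
  have hsup := sup_mem_parts π (Nat.succ_ne_zero _)
  have := card_erase_add_one hsup
  ext1
  simp only [dysonMapInv, dysonMap, card_addFirstColumn]
  rw [dropFirstColumn_addFirstColumn fun h => zero_notMem_parts π (mem_of_mem_erase h)]
  unfold rank at hπ
  convert cons_erase hsup using 2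
  omega

lemma dysonMap_dysonMapInv (σ : n.Partition) (hσ : rank σ ≤ m + 2) :
    dysonMap (dysonMapInv m σ) (le_rank_dysonMapInv σ) = σ := by
  have hdrop := addFirstColumn_dropFirstColumn (zero_notMem_parts σ)
  have := congrArg card hdrop
  rw [card_addFirstColumn] at this
  ext1
  simp only [dysonMap, sup_dysonMapInv hσ]
  simp only [dysonMapInv, erase_cons_head, card_cons]
  convert hdrop using 2
  omega

def dysonEquiv : {π : (n + m + 1).Partition // (m : ℤ) ≤ rank π} ≃
    {σ : n.Partition // rank σ ≤ m + 2} where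
  toFun π := ⟨dysonMap π.1 π.2, rank_dysonMap_le π.1 π.2⟩
  invFun σ := ⟨dysonMapInv m σ.1, le_rank_dysonMapInv σ.1⟩
  left_inv π := Subtype.ext (dysonMapInv_dysonMap π.1 π.2)
  right_inv σ := Subtype.ext (dysonMap_dysonMapInv σ.1 σ.2)

end DysonMap

noncomputable def rankGeCount (m : ℤ) (n : ℕ) : ℕ :=
  Nat.card {π : n.Partition // m ≤ rank π}

lemma rankGeCount_le (m : ℤ) (n : ℕ) : rankGeCount m n ≤ Fintype.card n.Partition := by
  rw [rankGeCount, Nat.card_eq_fintype_card]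
  exact Fintype.card_subtype_le _

lemma rankGeCount_eq_zero_of_le {m : ℤ} {n : ℕ} (hn : n ≠ 0) (h : (n : ℤ) ≤ m) :
    rankGeCount m n = 0 :=
  Nat.card_eq_zero.2 (.inl ⟨fun π => (rank_lt π.1 hn).not_ge (h.trans π.2)⟩)

lemma rankGeCount_zero {m : ℤ} (hm : 0 < m) : rankGeCount m 0 = 0 :=
  Nat.card_eq_zero.2 (.inl ⟨fun π => (hm.trans_le π.2).ne' (by simp [rank])⟩)

lemma rankGeCount_add_rankGeCount (m n : ℕ) :
    rankGeCount m (n + m + 1) + rankGeCount (m + 3) n = Fintype.card n.Partition := by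
  have hdyson : rankGeCount m (n + m + 1) = Fintype.card {σ : n.Partition // rank σ ≤ m + 2} := by
    rw [rankGeCount, Nat.card_congr dysonEquiv, Nat.card_eq_fintype_card]
  have hcompl : rankGeCount (m + 3) n = Fintype.card {σ : n.Partition // ¬ rank σ ≤ m + 2} := by
    rw [rankGeCount, Nat.card_eq_fintype_card]
    exact Fintype.card_congr (Equiv.subtypeEquivRight fun σ => by omega)
  rw [hdyson, hcompl, Fintype.card_subtype_compl]
  have := Fintype.card_subtype_le fun σ : n.Partition => rank σ ≤ m + 2
  omega

open Finset Filter Topology Nat.Partition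

lemma tsum_eq_tsum_add_of_eq_zero {G : Type*} [AddCommGroup G] [TopologicalSpace G]
    [IsTopologicalAddGroup G] [T2Space G] {f : ℕ → G} (hf : Summable f) {k : ℕ}
    (h : ∀ n < k, f n = 0) : ∑' n, f n = ∑' n, f (n + k) := by
  rw [← hf.sum_add_tsum_nat_add k, sum_eq_zero fun n hn => h n (mem_range.1 hn), zero_add]

section Restricted

lemma card_restricted_le_pow (N n : ℕ) : #(restricted n (· ≤ N)) ≤ (n + 1) ^ N := by
  have hcount (π : n.Partition) (a : ℕ) : π.parts.count a < n + 1 := by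
    have := card_nsmul_le_sum (s := π.parts) (a := 1) fun x hx => π.parts_pos hx
    rw [smul_eq_mul, mul_one, π.parts_sum] at this
    exact Nat.lt_succ_of_le ((count_le_card _ _).trans this)
  calc #(restricted n (· ≤ N))
      ≤ #(univ : Finset (Fin N → Fin (n + 1))) := by
        refine card_le_card_of_injOn (fun π i => ⟨π.parts.count ((i : ℕ) + 1), hcount π _⟩)
          (fun _ _ => mem_coe.2 (mem_univ _)) fun π₁ h₁ π₂ h₂ h => ?_
        simp only [restricted, coe_filter, mem_univ, true_and] at h₁ h₂
        ext1
        refine Multiset.ext.2 fun a => ?_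
        rcases Nat.eq_zero_or_pos a with rfl | ha
        · simp [count_eq_zero.2 (zero_notMem_parts _)]
        by_cases haN : a ≤ N
        · have := congrArg Fin.val (congrFun h ⟨a - 1, by omega⟩)
          simpa [Nat.sub_add_cancel ha] using this
        · rw [count_eq_zero.2 fun h => haN (h₁ _ h), count_eq_zero.2 fun h => haN (h₂ _ h)]
    _ = (n + 1) ^ N := by simp

lemma card_restricted_of_le {N n : ℕ} (h : n ≤ N) :
    #(restricted n (· ≤ N)) = Fintype.card n.Partition := by
  rw [restricted, filter_true_of_mem fun _ _ _ hi => (le_of_mem_parts hi).trans h, card_univ]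

lemma card_restricted_zero {n : ℕ} (hn : n ≠ 0) : #(restricted n (· ≤ 0)) = 0 :=
  card_eq_zero.2 (filter_false_of_mem fun π _ h =>
    (π.parts_pos (sup_mem_parts π hn)).ne' (Nat.le_zero.1 (h _ (sup_mem_parts π hn))))

lemma card_restricted_succ {N n : ℕ} (h : N + 1 ≤ n) :
    #(restricted n (· ≤ N + 1)) =
      #(restricted n (· ≤ N)) + #(restricted (n - (N + 1)) (· ≤ N + 1)) := by
  rw [← card_filter_add_card_filter_not (s := restricted n (· ≤ N + 1))
    (fun π => N + 1 ∈ π.parts), add_comm]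
  congr 1
  · congr 1
    ext π
    simp only [restricted, Finset.mem_filter, mem_univ, true_and]
    refine ⟨fun ⟨hle, hN⟩ i hi => ?_, fun hle => ⟨fun i hi => (hle i hi).trans N.le_succ,
      fun hN => (hle _ hN).not_gt N.lt_succ_self⟩⟩
    exact Nat.le_of_lt_succ ((hle i hi).lt_of_ne fun e => hN (e ▸ hi))
  · let e := partitionWithPartEquiv N.succ_pos h
    refine card_bij' (fun π hπ => e ⟨π, (Finset.mem_filter.1 hπ).2⟩) (fun σ _ => (e.symm σ).1)
      (fun π hπ => ?_) (fun σ hσ => ?_) (fun π _ => by simp) (fun σ _ => by simp)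
    · simp only [restricted, Finset.mem_filter, mem_univ, true_and] at hπ ⊢
      simpa [e] using fun i hi => hπ.1 i (mem_of_mem_erase hi)
    · simp only [restricted, Finset.mem_filter, mem_univ, true_and] at hσ ⊢
      simpa [e] using hσ

end Restricted

section EulerProduct

variable {q : ℝ}

lemma summable_card_restricted_mul_pow (N : ℕ) (hq : |q| < 1) :
    Summable fun n => (#(restricted n (· ≤ N)) : ℝ) * q ^ n := by
  refine Summable.of_norm (summable_norm_mul_geometric_of_norm_lt_one (k := N) hq ?_)
  refine Asymptotics.IsBigO.of_bound (2 ^ N) (eventually_atTop.2 ⟨1, fun n hn => ?_⟩)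
  have : #(restricted n (· ≤ N)) ≤ 2 ^ N * n ^ N := calc
    _ ≤ (n + 1) ^ N := card_restricted_le_pow N n
    _ ≤ (2 * n) ^ N := Nat.pow_le_pow_left (by omega) N
    _ = 2 ^ N * n ^ N := mul_pow 2 n N
  simpa using (Nat.cast_le (α := ℝ)).2 this

lemma tsum_card_restricted_succ (N : ℕ) (hq : |q| < 1) :
    ∑' n, (#(restricted n (· ≤ N + 1)) : ℝ) * q ^ n =
      ∑' n, (#(restricted n (· ≤ N)) : ℝ) * q ^ n +
        q ^ (N + 1) * ∑' n, (#(restricted n (· ≤ N + 1)) : ℝ) * q ^ n := by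
  have hs := summable_card_restricted_mul_pow (N + 1) hq
  have hs' := summable_card_restricted_mul_pow N hq
  rw [← sub_eq_iff_eq_add', ← hs.tsum_sub hs', tsum_eq_tsum_add_of_eq_zero (hs.sub hs') (k := N + 1)
    fun n hn => by simp [card_restricted_of_le hn.le, card_restricted_of_le (Nat.le_of_lt_succ hn)],
    ← tsum_mul_left]
  refine tsum_congr fun n => ?_
  rw [card_restricted_succ (by omega), Nat.add_sub_cancel, pow_add]
  push_cast
  ring

lemma prod_mul_tsum_card_restricted (N : ℕ) (hq : |q| < 1) :
    (∏ k ∈ range N, (1 - q ^ (k + 1))) * ∑' n, (#(restricted n (· ≤ N)) : ℝ) * q ^ n = 1 := by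
  induction N with
  | zero =>
    rw [prod_range_zero, one_mul, tsum_eq_single 0 fun n hn => by
      rw [card_restricted_zero hn, Nat.cast_zero, zero_mul], card_restricted_of_le le_rfl]
    simp
  | succ N ih =>
    have hrec : (1 - q ^ (N + 1)) * ∑' n, (#(restricted n (· ≤ N + 1)) : ℝ) * q ^ n =
        ∑' n, (#(restricted n (· ≤ N)) : ℝ) * q ^ n := by
      linear_combination tsum_card_restricted_succ N hq
    rw [prod_range_succ, mul_assoc, hrec, ih]

lemma multipliable_one_sub_pow (hq : |q| < 1) : Multipliable fun j : ℕ => 1 - q ^ (j + 1) := by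
  simp_rw [sub_eq_add_neg]
  refine multipliable_one_add_of_summable ?_
  simpa using (summable_nat_add_iff 1).2 (summable_geometric_of_lt_one (abs_nonneg q) hq)

lemma euler_pos {y : ℝ} (hy0 : 0 ≤ y) (hy1 : y < 1) : 0 < euler y := by
  have hpos (j : ℕ) : 0 < 1 - y ^ (j + 1) := sub_pos.2 (pow_lt_one₀ hy0 hy1 j.succ_ne_zero)
  have hlog : Summable fun j : ℕ => Real.log (1 - y ^ (j + 1)) := by
    simpa [sub_eq_add_neg] using Real.summable_log_one_add_of_summable
      ((summable_nat_add_iff 1).2 (summable_geometric_of_lt_one hy0 hy1)).neg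
  rw [euler, ← Real.rexp_tsum_eq_tprod hpos hlog]
  exact Real.exp_pos _

lemma euler_le_prod_range {y : ℝ} (hy0 : 0 ≤ y) (hy1 : y < 1) (N : ℕ) :
    euler y ≤ ∏ k ∈ range N, (1 - y ^ (k + 1)) := by
  have hfactor (k : ℕ) : 0 ≤ 1 - y ^ (k + 1) ∧ 1 - y ^ (k + 1) ≤ 1 :=
    ⟨sub_nonneg.2 (pow_le_one₀ hy0 hy1.le), sub_le_self _ (pow_nonneg hy0 _)⟩
  refine Antitone.le_of_tendsto (antitone_nat_of_succ_le fun N => ?_)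
    (multipliable_one_sub_pow (by rwa [abs_of_nonneg hy0])).tendsto_prod_tprod_nat N
  rw [prod_range_succ]
  exact mul_le_of_le_one_right (prod_nonneg fun k _ => (hfactor k).1) (hfactor N).2

lemma summable_card_partition_mul_pow {y : ℝ} (hy0 : 0 ≤ y) (hy1 : y < 1) :
    Summable fun n => (Fintype.card n.Partition : ℝ) * y ^ n := by
  have hy : |y| < 1 := by rwa [abs_of_nonneg hy0]
  refine summable_of_sum_range_le (c := (euler y)⁻¹) (fun n => by positivity) fun N => ?_
  calc ∑ n ∈ range N, (Fintype.card n.Partition : ℝ) * y ^ n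
      = ∑ n ∈ range N, (#(restricted n (· ≤ N)) : ℝ) * y ^ n :=
        sum_congr rfl fun n hn => by rw [card_restricted_of_le (Finset.mem_range.1 hn).le]
    _ ≤ ∑' n, (#(restricted n (· ≤ N)) : ℝ) * y ^ n :=
        (summable_card_restricted_mul_pow N hy).sum_le_tsum _ fun n _ => by positivity
    _ = (∏ k ∈ range N, (1 - y ^ (k + 1)))⁻¹ :=
        eq_inv_of_mul_eq_one_right (prod_mul_tsum_card_restricted N hy)
    _ ≤ (euler y)⁻¹ := inv_anti₀ (euler_pos hy0 hy1) (euler_le_prod_range hy0 hy1 N)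

lemma tendsto_tsum_card_restricted (hq : |q| < 1) :
    Tendsto (fun N => ∑' n, (#(restricted n (· ≤ N)) : ℝ) * q ^ n) atTop
      (𝓝 (∑' n, (Fintype.card n.Partition : ℝ) * q ^ n)) := by
  refine tendsto_tsum_of_dominated_convergence
    (summable_card_partition_mul_pow (abs_nonneg q) hq)
    (fun n => tendsto_atTop_of_eventually_const (i₀ := n) fun N hN => by
      rw [card_restricted_of_le hN])
    (.of_forall fun N n => ?_)
  simp only [norm_mul, norm_pow, Real.norm_eq_abs, Nat.abs_cast]
  gcongr
  exact card_le_univ _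

lemma tsum_card_partition_mul_pow (hq : |q| < 1) :
    ∑' n, (Fintype.card n.Partition : ℝ) * q ^ n = (euler q)⁻¹ :=
  eq_inv_of_mul_eq_one_right (tendsto_nhds_unique
    ((multipliable_one_sub_pow hq).tendsto_prod_tprod_nat.mul (tendsto_tsum_card_restricted hq))
    (tendsto_const_nhds.congr fun N => (prod_mul_tsum_card_restricted N hq).symm))

end EulerProduct

lemma eq_zero_of_abs_le_mul_shift {D : ℕ → ℝ} {C r : ℝ} (k : ℕ) (hr0 : 0 ≤ r) (hr1 : r < 1)
    (hC : ∀ m, |D m| ≤ C) (hD : ∀ m, |D m| ≤ r * |D (m + k)|) (m : ℕ) : D m = 0 := by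
  have hiter (J : ℕ) : ∀ m, |D m| ≤ r ^ J * C := by
    induction J with
    | zero => simpa using hC
    | succ J ih =>
      intro m
      rw [pow_succ', mul_assoc]
      exact (hD m).trans (mul_le_mul_of_nonneg_left (ih _) hr0)
  have hlim : Tendsto (fun J => r ^ J * C) atTop (𝓝 0) := by
    simpa using (tendsto_pow_atTop_nhds_zero_of_lt_one hr0 hr1).mul_const C
  exact abs_nonpos_iff.1 (ge_of_tendsto' hlim fun J => hiter J m)

def pentagonalExp (m j : ℕ) : ℕ := (j + 1) * (3 * (j + 1) - 1) / 2 + m * (j + 1)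

lemma pentagonalExp_zero (m : ℕ) : pentagonalExp m 0 = m + 1 := by
  simp [pentagonalExp, add_comm]

lemma pentagonalExp_succ (m j : ℕ) :
    pentagonalExp m (j + 1) = pentagonalExp (m + 3) j + (m + 1) := by
  have h1 : 3 * (j + 1 + 1) - 1 = 3 * j + 5 := by omega
  have h2 : 3 * (j + 1) - 1 = 3 * j + 2 := by omega
  rw [pentagonalExp, pentagonalExp, h1, h2, show (j + 1 + 1) * (3 * j + 5) =
    (j + 1) * (3 * j + 2) + 2 * (3 * j + 4) by ring, Nat.add_mul_div_left _ _ two_pos]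
  ring

lemma le_pentagonalExp (m j : ℕ) : j ≤ pentagonalExp m j := by
  have := (Nat.le_div_iff_mul_le two_pos).2
    (Nat.mul_le_mul_left (j + 1) (by omega : 2 ≤ 3 * (j + 1) - 1))
  unfold pentagonalExp
  omega

noncomputable def pentagonalSeries (q : ℝ) (m : ℕ) : ℝ :=
  ∑' j : ℕ, (-1 : ℝ) ^ j * q ^ pentagonalExp m j

section Recurrences

variable {q : ℝ}

lemma norm_pentagonalSeries_term_le (hq : |q| < 1) (m j : ℕ) :
    ‖(-1 : ℝ) ^ j * q ^ pentagonalExp m j‖ ≤ |q| ^ j := by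
  rw [norm_mul, norm_pow, norm_neg, norm_one, one_pow, one_mul, norm_pow, Real.norm_eq_abs]
  exact pow_le_pow_of_le_one (abs_nonneg q) hq.le (le_pentagonalExp m j)

lemma summable_pentagonalSeries (m : ℕ) (hq : |q| < 1) :
    Summable fun j => (-1 : ℝ) ^ j * q ^ pentagonalExp m j :=
  .of_norm_bounded (summable_geometric_of_lt_one (abs_nonneg q) hq)
    (norm_pentagonalSeries_term_le hq m)

lemma abs_pentagonalSeries_le (m : ℕ) (hq : |q| < 1) : |pentagonalSeries q m| ≤ (1 - |q|)⁻¹ :=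
  tsum_of_norm_bounded (hasSum_geometric_of_lt_one (abs_nonneg q) hq)
    (norm_pentagonalSeries_term_le hq m)

lemma pentagonalSeries_eq_pow_mul_sub (m : ℕ) (hq : |q| < 1) :
    pentagonalSeries q m = q ^ (m + 1) * (1 - pentagonalSeries q (m + 3)) := by
  rw [pentagonalSeries, (summable_pentagonalSeries m hq).tsum_eq_zero_add, pentagonalSeries,
    mul_sub, mul_one, ← tsum_mul_left, sub_eq_add_neg, ← tsum_neg, pentagonalExp_zero, pow_zero,
    one_mul]
  congr 1
  exact tsum_congr fun j => by rw [pentagonalExp_succ, pow_succ, pow_add]; ring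

lemma summable_rankGeCount_mul_pow (m : ℤ) (hq : |q| < 1) :
    Summable fun n => (rankGeCount m n : ℝ) * q ^ n :=
  .of_norm_bounded (summable_card_partition_mul_pow (abs_nonneg q) hq) fun n => by
    simp only [norm_mul, norm_pow, Real.norm_eq_abs, Nat.abs_cast]
    gcongr
    exact rankGeCount_le m n

lemma abs_Q_le (m : ℤ) (hq : |q| < 1) :
    |Q q m| ≤ ∑' n, (Fintype.card (n + 1).Partition : ℝ) * |q| ^ (n + 1) :=
  (Real.norm_eq_abs _).symm.trans_le <| tsum_of_norm_bounded
    ((summable_nat_add_iff 1).2 (summable_card_partition_mul_pow (abs_nonneg q) hq)).hasSum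
    fun n => by
      simp only [norm_mul, norm_pow, Real.norm_eq_abs, Nat.abs_cast]
      gcongr
      exact rankGeCount_le m (n + 1)

lemma Q_eq_pow_mul_sub (m : ℕ) (hq : |q| < 1) :
    Q q m = q ^ (m + 1) * ((euler q)⁻¹ - Q q (m + 3)) := by
  have hs := summable_rankGeCount_mul_pow (m + 3) hq
  have hp : Summable fun n => (Fintype.card n.Partition : ℝ) * q ^ n :=
    .of_norm_bounded (summable_card_partition_mul_pow (abs_nonneg q) hq) fun n => by simp
  calc Q q m = ∑' n, (rankGeCount m (n + m + 1) : ℝ) * q ^ (n + m + 1) :=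
        tsum_eq_tsum_add_of_eq_zero ((summable_nat_add_iff 1).2
          (summable_rankGeCount_mul_pow m hq)) fun n hn => by
            rw [rankGeCount_eq_zero_of_le n.succ_ne_zero (by omega), Nat.cast_zero, zero_mul]
    _ = ∑' n, q ^ (m + 1) * ((Fintype.card n.Partition : ℝ) * q ^ n -
          (rankGeCount (m + 3) n : ℝ) * q ^ n) :=
        tsum_congr fun n => by
          rw [← rankGeCount_add_rankGeCount m n, pow_add, pow_add]
          push_cast
          ring
    _ = q ^ (m + 1) * ((euler q)⁻¹ - Q q (m + 3)) := by
        rw [tsum_mul_left, hp.tsum_sub hs, tsum_card_partition_mul_pow hq, hs.tsum_eq_zero_add,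
          rankGeCount_zero (by omega), Nat.cast_zero, zero_mul, zero_add]
        rfl

end Recurrences

/-- for m ≥ 0,
`Q_m(q) = (1/(q;q)_∞) Σ_{j≥1} (-1)^{j-1} q^{j(3j-1)/2 + mj}`. -/
theorem stmt3 (q : ℝ) (hq : |q| < 1) (m : ℕ) :
    Q q m = (euler q)⁻¹ *
      ∑' j : ℕ, (-1 : ℝ) ^ j * q ^ ((j + 1) * (3 * (j + 1) - 1) / 2 + m * (j + 1)) := by
  set D : ℕ → ℝ := fun m => Q q m - (euler q)⁻¹ * pentagonalSeries q m
  have hrec (m : ℕ) : D m = -q ^ (m + 1) * D (m + 3) := by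
    simp only [D, Q_eq_pow_mul_sub m hq, pentagonalSeries_eq_pow_mul_sub m hq]
    push_cast
    ring
  have hshift (m : ℕ) : |D m| ≤ |q| * |D (m + 3)| := by
    rw [hrec, abs_mul, abs_neg, abs_pow]
    gcongr
    exact pow_le_of_le_one (abs_nonneg q) hq.le m.succ_ne_zero
  have hbound (m : ℕ) : |D m| ≤ ∑' n, (Fintype.card (n + 1).Partition : ℝ) * |q| ^ (n + 1) +
      |(euler q)⁻¹| * (1 - |q|)⁻¹ := by
    refine (abs_sub _ _).trans (add_le_add (abs_Q_le _ hq) ?_)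
    rw [abs_mul]
    gcongr
    exact abs_pentagonalSeries_le m hq
  exact sub_eq_zero.1 (eq_zero_of_abs_le_mul_shift 3 (abs_nonneg q) hq hbound hshift m)

end Dyson
end

section
/- For m ≥ 0, Q_m^L(q) + q^{m+1} Q_{m+3}^{L+1}(q) = q^{m+1} · qbinom(2L−m, L+1). -/
namespace Dyson

section Aux
open Multiset Finset

open Multiset Finset


lemma card_split {α : Type*} [Fintype α] (p c : α → Prop) :
    Nat.card {x // p x} = Nat.card {x // p x ∧ c x} + Nat.card {x // p x ∧ ¬ c x} := by
  classical
  rw [← Nat.card_congr (Equiv.subtypeSubtypeEquivSubtypeInter p c),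
      ← Nat.card_congr (Equiv.subtypeSubtypeEquivSubtypeInter p (fun x => ¬ c x)),
      ← Nat.card_sum]
  exact Nat.card_congr (Equiv.sumCompl (fun x : {y // p y} => c x.1)).symm

/-- removing one part equal to `a` -/
def removeEquiv (P : Multiset ℕ → Prop) (a k : ℕ) (ha : 0 < a) :
    {π : (a + k).Partition // a ∈ π.parts ∧ π.parts.sup ≤ a ∧ P π.parts} ≃
    {σ : k.Partition // σ.parts.sup ≤ a ∧ P (a ::ₘ σ.parts)} where
  toFun π := ⟨⟨π.1.parts.erase a,
      fun hi => π.1.parts_pos (Multiset.mem_of_mem_erase hi), by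
        have h1 : a + (π.1.parts.erase a).sum = a + k := by
          rw [← Multiset.sum_cons, Multiset.cons_erase π.2.1, π.1.parts_sum]
        exact Nat.add_left_cancel h1⟩, by
      constructor
      · exact Multiset.sup_le.2 fun x hx =>
          Multiset.sup_le.1 π.2.2.1 x (Multiset.mem_of_mem_erase hx)
      · show P (a ::ₘ π.1.parts.erase a)
        rw [Multiset.cons_erase π.2.1]; exact π.2.2.2⟩
  invFun σ := ⟨⟨a ::ₘ σ.1.parts,
      fun hi => by
        rcases Multiset.mem_cons.1 hi with h | h
        · exact h ▸ ha
        · exact σ.1.parts_pos h, by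
        rw [Multiset.sum_cons, σ.1.parts_sum]⟩, by
      refine ⟨Multiset.mem_cons_self _ _, ?_, σ.2.2⟩
      rw [Multiset.sup_cons]
      exact sup_le le_rfl σ.2.1⟩
  left_inv π := by
    apply Subtype.ext; apply Nat.Partition.ext
    exact Multiset.cons_erase π.2.1
  right_inv σ := by
    apply Subtype.ext; apply Nat.Partition.ext
    exact Multiset.erase_cons_head _ _

lemma card_remove (P : Multiset ℕ → Prop) (a k : ℕ) (ha : 0 < a) :
    Nat.card {π : (a + k).Partition // a ∈ π.parts ∧ π.parts.sup ≤ a ∧ P π.parts} =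
    Nat.card {σ : k.Partition // σ.parts.sup ≤ a ∧ P (a ::ₘ σ.parts)} :=
  Nat.card_congr (removeEquiv P a k ha)

noncomputable def Bcard (a b n : ℕ) : ℕ :=
  Nat.card {π : n.Partition // π.parts.sup ≤ a ∧ Multiset.card π.parts ≤ b}

noncomputable def Acard (m L : ℤ) (n : ℕ) : ℕ :=
  Nat.card {π : n.Partition // m ≤ rank π ∧ (π.parts.sup : ℤ) ≤ L}

lemma parts_zero (π : (0:ℕ).Partition) : π.parts = 0 := by
  have h := π.parts_sum
  ext a
  simp only [Multiset.count_zero]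
  by_contra hc
  have ha : a ∈ π.parts := by
    rw [← Multiset.count_pos]; omega
  have h1 := π.parts_pos ha
  have h2 := Multiset.single_le_sum (fun x _ => Nat.zero_le x) a ha
  omega

lemma part_le_n {n : ℕ} (π : n.Partition) {a : ℕ} (h : a ∈ π.parts) : a ≤ n :=
  π.parts_sum ▸ Multiset.single_le_sum (fun x _ => Nat.zero_le x) a h

lemma card_le_of_sup {n : ℕ} (π : n.Partition) : n ≤ Multiset.card π.parts * π.parts.sup := by
  have := Multiset.sum_le_card_nsmul π.parts π.parts.sup (fun x hx => Multiset.le_sup hx)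
  simpa [π.parts_sum, Nat.smul_one_eq_cast] using this

lemma Bcard_zero (a b : ℕ) : Bcard a b 0 = 1 := by
  rw [Bcard, Nat.card_eq_one_iff_unique]
  constructor
  · constructor
    intro x y
    apply Subtype.ext; apply Nat.Partition.ext
    rw [parts_zero x.1, parts_zero y.1]
  · exact ⟨⟨⟨0, by simp, by simp⟩, by simp⟩⟩

lemma Bcard_vanish (a b n : ℕ) (h : a * b < n) : Bcard a b n = 0 := by
  rw [Bcard, Nat.card_eq_zero]
  left
  constructor
  rintro ⟨π, h1, h2⟩
  have h3 := card_le_of_sup π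
  have h4 : n ≤ b * a := le_trans h3 (Nat.mul_le_mul h2 h1)
  have h5 : b * a = a * b := Nat.mul_comm b a
  omega

lemma Bcard_b0 (a n : ℕ) : Bcard a 0 (n + 1) = 0 := by
  rw [Bcard, Nat.card_eq_zero]
  left; constructor
  rintro ⟨π, h1, h2⟩
  have h3 : π.parts = 0 := Multiset.card_eq_zero.1 (Nat.le_zero.1 h2)
  have := π.parts_sum
  rw [h3] at this; simp at this

lemma Bcard_a0 (b n : ℕ) : Bcard 0 b (n + 1) = 0 := by
  rw [Bcard, Nat.card_eq_zero]
  left; constructor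
  rintro ⟨π, h1, h2⟩
  have h3 : π.parts = 0 := by
    ext a; simp only [Multiset.count_zero]
    by_contra hc
    have ha : a ∈ π.parts := by rw [← Multiset.count_pos]; omega
    have := π.parts_pos ha
    have := Multiset.sup_le.1 h1 a ha
    omega
  have := π.parts_sum
  rw [h3] at this; simp at this

lemma Bcard_rec (a b n : ℕ) :
    Bcard (a+1) (b+1) n =
      Bcard a (b+1) n + (if a + 1 ≤ n then Bcard (a+1) b (n - (a+1)) else 0) := by
  classical
  rw [Bcard, card_split (c := fun π => (a+1) ∈ π.parts), add_comm]
  congr 1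
  · -- no part equal to a+1 : sup ≤ a
    rw [Bcard]
    apply Nat.card_congr
    apply Equiv.subtypeEquivRight
    intro π
    constructor
    · rintro ⟨⟨h1, h2⟩, h3⟩
      refine ⟨Multiset.sup_le.2 fun x hx => ?_, h2⟩
      have := Multiset.sup_le.1 h1 x hx
      have : x ≠ a + 1 := fun he => h3 (he ▸ hx)
      omega
    · rintro ⟨h1, h2⟩
      refine ⟨⟨Multiset.sup_le.2 fun x hx => le_trans (Multiset.sup_le.1 h1 x hx) (by omega), h2⟩,
        fun hm => ?_⟩
      have := Multiset.sup_le.1 h1 _ hm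
      omega
  · -- a part equal to a+1
    by_cases hn : a + 1 ≤ n
    · rw [if_pos hn]
      obtain ⟨k, rfl⟩ : ∃ k, n = (a+1) + k := ⟨n - (a+1), by omega⟩
      have h0 : (a + 1 + k) - (a + 1) = k := by omega
      rw [h0]
      calc Nat.card {x : ((a+1)+k).Partition //
              (x.parts.sup ≤ a + 1 ∧ Multiset.card x.parts ≤ b + 1) ∧ (a+1) ∈ x.parts}
          = Nat.card {π : ((a+1)+k).Partition //
              (a+1) ∈ π.parts ∧ π.parts.sup ≤ a + 1 ∧ Multiset.card π.parts ≤ b + 1} :=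
            Nat.card_congr (Equiv.subtypeEquivRight fun π => by tauto)
        _ = Nat.card {σ : k.Partition //
              σ.parts.sup ≤ a + 1 ∧ Multiset.card ((a+1) ::ₘ σ.parts) ≤ b + 1} :=
            card_remove (fun s => Multiset.card s ≤ b + 1) (a+1) k (by omega)
        _ = Bcard (a+1) b k := by
            rw [Bcard]
            apply Nat.card_congr
            apply Equiv.subtypeEquivRight
            intro σ
            simp only [Multiset.card_cons]
            omega
    · rw [if_neg hn, Nat.card_eq_zero]
      left; constructor
      rintro ⟨π, _, hm⟩
      exact hn (part_le_n π hm)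


open Multiset Finset

lemma Acard_vanish (m : ℕ) (L n : ℕ) (h : L * L < n) : Acard m L n = 0 := by
  rw [Acard, Nat.card_eq_zero]
  left; constructor
  rintro ⟨π, h1, h2⟩
  rw [rank] at h1
  have hs : π.parts.sup ≤ L := by exact_mod_cast h2
  have hc : Multiset.card π.parts ≤ π.parts.sup := by
    have : (Multiset.card π.parts : ℤ) ≤ (π.parts.sup : ℤ) := by
      have : (0:ℤ) ≤ m := Int.natCast_nonneg m
      omega
    exact_mod_cast this
  have h3 := card_le_of_sup π
  have h4 : Multiset.card π.parts * π.parts.sup ≤ L * L :=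
    Nat.mul_le_mul (le_trans hc hs) hs
  omega

lemma Acard_zero_of_le (m L : ℤ) (n : ℕ) (hL : L ≤ m) (hn : 1 ≤ n) : Acard m L n = 0 := by
  rw [Acard, Nat.card_eq_zero]
  left; constructor
  rintro ⟨π, h1, h2⟩
  rw [rank] at h1
  have hc : π.parts ≠ 0 := by
    intro h0
    have := π.parts_sum
    rw [h0] at this; simp at this; omega
  have : 0 < Multiset.card π.parts := Multiset.card_pos.2 hc
  omega

lemma Acard_succ (m L n : ℕ) :
    Acard m (L+1 : ℕ) n = Acard m L n +
      (if m + 1 ≤ L + 1 ∧ L + 1 ≤ n then Bcard (L+1) (L - m) (n - (L+1)) else 0) := by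
  classical
  rw [Acard, card_split (c := fun π => (L+1) ∈ π.parts), add_comm]
  congr 1
  · -- no part equal to L+1
    rw [Acard]
    apply Nat.card_congr
    apply Equiv.subtypeEquivRight
    intro π
    have key : ∀ (h : (L+1) ∉ π.parts), (π.parts.sup : ℤ) ≤ (L+1:ℕ) → (π.parts.sup : ℤ) ≤ (L:ℕ) := by
      intro h3 h2
      have hs : π.parts.sup ≤ L + 1 := by exact_mod_cast h2
      have : π.parts.sup ≤ L := by
        apply Multiset.sup_le.2
        intro x hx
        have := Multiset.sup_le.1 hs x hx
        have : x ≠ L + 1 := fun he => h3 (he ▸ hx)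
        omega
      exact_mod_cast this
    constructor
    · rintro ⟨⟨h1, h2⟩, h3⟩
      exact ⟨h1, key h3 h2⟩
    · rintro ⟨h1, h2⟩
      have hs : π.parts.sup ≤ L := by exact_mod_cast h2
      refine ⟨⟨h1, by exact_mod_cast Nat.le_succ_of_le hs⟩, fun hm => ?_⟩
      have := Multiset.sup_le.1 hs _ hm
      omega
  · -- a part equal to L+1
    by_cases hc : m + 1 ≤ L + 1 ∧ L + 1 ≤ n
    · rw [if_pos hc]
      obtain ⟨hm, hn⟩ := hc
      obtain ⟨k, rfl⟩ : ∃ k, n = (L+1) + k := ⟨n - (L+1), by omega⟩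
      have h0 : (L + 1 + k) - (L + 1) = k := by omega
      rw [h0]
      calc Nat.card {x : ((L+1)+k).Partition //
              ((m:ℤ) ≤ rank x ∧ (x.parts.sup : ℤ) ≤ (L+1:ℕ)) ∧ (L+1) ∈ x.parts}
          = Nat.card {π : ((L+1)+k).Partition //
              (L+1) ∈ π.parts ∧ π.parts.sup ≤ L+1 ∧
                ((m:ℤ) ≤ (π.parts.sup : ℤ) - Multiset.card π.parts)} := by
            apply Nat.card_congr
            apply Equiv.subtypeEquivRight
            intro π
            rw [rank]
            constructor
            · rintro ⟨⟨h1, h2⟩, h3⟩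
              exact ⟨h3, by exact_mod_cast h2, h1⟩
            · rintro ⟨h1, h2, h3⟩
              exact ⟨⟨h3, by exact_mod_cast h2⟩, h1⟩
        _ = Nat.card {σ : k.Partition //
              σ.parts.sup ≤ L+1 ∧
                ((m:ℤ) ≤ (((L+1) ::ₘ σ.parts).sup : ℤ) - Multiset.card ((L+1) ::ₘ σ.parts))} :=
            card_remove (fun s => (m:ℤ) ≤ (s.sup : ℤ) - Multiset.card s) (L+1) k (by omega)
        _ = Bcard (L+1) (L - m) k := by
            rw [Bcard]
            apply Nat.card_congr
            apply Equiv.subtypeEquivRight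
            intro σ
            constructor
            · rintro ⟨h1, h2⟩
              refine ⟨h1, ?_⟩
              rw [Multiset.sup_cons, Multiset.card_cons] at h2
              have hsup : (L+1) ⊔ σ.parts.sup = L + 1 := sup_eq_left.2 h1
              rw [hsup] at h2
              have : (Multiset.card σ.parts : ℤ) ≤ (L:ℤ) - m := by push_cast at h2 ⊢; omega
              omega
            · rintro ⟨h1, h2⟩
              refine ⟨h1, ?_⟩
              rw [Multiset.sup_cons, Multiset.card_cons]
              have hsup : (L+1) ⊔ σ.parts.sup = L + 1 := sup_eq_left.2 h1
              rw [hsup]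
              have : (Multiset.card σ.parts : ℤ) ≤ (L:ℤ) - m := by
                have := hm; push_cast; omega
              push_cast
              push_cast at this
              omega
    · rw [if_neg hc, Nat.card_eq_zero]
      left; constructor
      rintro ⟨π, ⟨h1, h2⟩, h3⟩
      rw [rank] at h1
      have hn : L + 1 ≤ (L+1) + 0 := le_refl _
      have hle : L + 1 ≤ n := part_le_n π h3
      have hsup : π.parts.sup ≤ L + 1 := by exact_mod_cast h2
      have hsup2 : L + 1 ≤ π.parts.sup := Multiset.le_sup h3
      have hcard : 0 < Multiset.card π.parts := by
        rw [Multiset.card_pos]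
        intro h0; rw [h0] at h3; simp at h3
      have : π.parts.sup = L + 1 := le_antisymm hsup hsup2
      rw [this] at h1
      have : m + 1 ≤ L + 1 := by push_cast at h1; omega
      exact hc ⟨this, hle⟩


open Finset


noncomputable def qb (q : ℝ) (n k : ℕ) : ℝ :=
  if k ≤ n then qPoch q n / (qPoch q k * qPoch q (n - k)) else 0

variable {q : ℝ} (hq : |q| < 1)

lemma one_sub_pow_pos (hq : |q| < 1) (j : ℕ) : 0 < 1 - q ^ (j + 1) := by
  have h1 : |q ^ (j+1)| < 1 := by
    rw [abs_pow]
    exact pow_lt_one₀ (abs_nonneg q) hq (Nat.succ_ne_zero j)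
  have := abs_lt.1 h1
  linarith [this.2]

lemma qPoch_pos (hq : |q| < 1) (n : ℕ) : 0 < qPoch q n :=
  Finset.prod_pos fun j _ => one_sub_pow_pos hq j

lemma qPoch_ne (hq : |q| < 1) (n : ℕ) : qPoch q n ≠ 0 := (qPoch_pos hq n).ne'

lemma qPoch_zero : qPoch q 0 = 1 := by simp [qPoch]

lemma qPoch_succ (n : ℕ) : qPoch q (n+1) = qPoch q n * (1 - q ^ (n+1)) := by
  rw [qPoch, qPoch, Finset.prod_range_succ]

lemma qb_of_le {n k : ℕ} (h : k ≤ n) :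
    qb q n k = qPoch q n / (qPoch q k * qPoch q (n - k)) := if_pos h

lemma qb_of_gt {n k : ℕ} (h : n < k) : qb q n k = 0 := if_neg (by omega)

lemma qb_self (hq : |q| < 1) (n : ℕ) : qb q n n = 1 := by
  rw [qb_of_le le_rfl, Nat.sub_self, qPoch_zero, mul_one, div_self (qPoch_ne hq n)]

lemma qb_zero (hq : |q| < 1) (n : ℕ) : qb q n 0 = 1 := by
  rw [qb_of_le (Nat.zero_le n), qPoch_zero, Nat.sub_zero, one_mul, div_self (qPoch_ne hq n)]

lemma qb_symm (hq : |q| < 1) {n k : ℕ} (h : k ≤ n) : qb q n k = qb q n (n - k) := by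
  rw [qb_of_le h, qb_of_le (Nat.sub_le n k), Nat.sub_sub_self h, mul_comm]

lemma pascal1 (hq : |q| < 1) (n k : ℕ) :
    qb q (n+1) (k+1) = qb q n k + q ^ (k+1) * qb q n (k+1) := by
  rcases lt_trichotomy k n with h | rfl | h
  · obtain ⟨j, rfl⟩ : ∃ j, n = k + 1 + j := ⟨n - (k+1), by omega⟩
    rw [qb_of_le (by omega), qb_of_le (by omega), qb_of_le (by omega),
      show k + 1 + j + 1 - (k + 1) = j + 1 by omega,
      show k + 1 + j - k = j + 1 by omega,
      show k + 1 + j - (k + 1) = j by omega,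
      qPoch_succ (k + 1 + j), qPoch_succ k, qPoch_succ j]
    have h1 := qPoch_ne hq (k+1+j)
    have h2 := qPoch_ne hq k
    have h3 := qPoch_ne hq j
    have h4 := (one_sub_pow_pos hq k).ne'
    have h5 := (one_sub_pow_pos hq j).ne'
    have h6 : q ^ (k + 1 + j + 1) = q ^ (k+1) * q ^ (j+1) := by ring
    field_simp
    rw [h6]; ring
  · rw [qb_self hq, qb_self hq, qb_of_gt (by omega), mul_zero, add_zero]
  · rw [qb_of_gt (by omega), qb_of_gt (by omega), qb_of_gt (by omega)]
    ring

lemma pascal2 (hq : |q| < 1) (n k : ℕ) :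
    qb q (n+1) (k+1) = qb q n (k+1) + q ^ (n-k) * qb q n k := by
  rcases lt_trichotomy k n with h | rfl | h
  · obtain ⟨j, rfl⟩ : ∃ j, n = k + 1 + j := ⟨n - (k+1), by omega⟩
    rw [qb_of_le (by omega), qb_of_le (by omega), qb_of_le (by omega),
      show k + 1 + j + 1 - (k + 1) = j + 1 by omega,
      show k + 1 + j - k = j + 1 by omega,
      show k + 1 + j - (k + 1) = j by omega,
      qPoch_succ (k + 1 + j), qPoch_succ k, qPoch_succ j]
    have h1 := qPoch_ne hq (k+1+j)
    have h2 := qPoch_ne hq k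
    have h3 := qPoch_ne hq j
    have h4 := (one_sub_pow_pos hq k).ne'
    have h5 := (one_sub_pow_pos hq j).ne'
    have h6 : q ^ (k + 1 + j + 1) = q ^ (j+1) * q ^ (k+1) := by ring
    field_simp
    rw [h6]; ring
  · rw [qb_self hq, qb_self hq, qb_of_gt (by omega), Nat.sub_self, pow_zero]
    ring
  · rw [qb_of_gt (by omega), qb_of_gt (by omega), qb_of_gt (by omega),
      show n - k = 0 by omega]
    ring


open Finset

lemma S_eq_sum {q : ℝ} (f : ℕ → ℕ) (N : ℕ) (h : ∀ n, N ≤ n → f n = 0) :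
    ∑' n : ℕ, (f n : ℝ) * q ^ n = ∑ n ∈ Finset.range N, (f n : ℝ) * q ^ n := by
  apply tsum_eq_sum
  intro b hb
  have : N ≤ b := by
    by_contra hc
    exact hb (Finset.mem_range.2 (by omega))
  rw [h b this]; simp

noncomputable def Bgf (q : ℝ) (a b : ℕ) : ℝ := ∑' n : ℕ, (Bcard a b n : ℝ) * q ^ n

lemma Bgf_eq_sum {q : ℝ} (a b N : ℕ) (h : a * b < N) :
    Bgf q a b = ∑ n ∈ Finset.range N, (Bcard a b n : ℝ) * q ^ n :=
  S_eq_sum _ N (fun n hn => Bcard_vanish a b n (by omega))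

lemma Bgf_delta {q : ℝ} (a b : ℕ) (h : ∀ n, Bcard a b (n+1) = 0) : Bgf q a b = 1 := by
  rw [Bgf, S_eq_sum _ 1 (fun n hn => by
    obtain ⟨k, rfl⟩ : ∃ k, n = k + 1 := ⟨n - 1, by omega⟩
    exact h k)]
  simp [Bcard_zero]

lemma Bgf_eq_qb {q : ℝ} (hq : |q| < 1) (b a : ℕ) : Bgf q a b = qb q (a + b) b := by
  induction b generalizing a with
  | zero =>
    rw [Bgf_delta a 0 (fun n => Bcard_b0 a n), Nat.add_zero, qb_zero hq]
  | succ b ih =>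
    induction a with
    | zero =>
      rw [Bgf_delta 0 (b+1) (fun n => Bcard_a0 (b+1) n), Nat.zero_add, qb_self hq]
    | succ a ih2 =>
      set K := (a+1) * (b+1) + 1 with hK
      set N := (a+1) + K with hN
      have hbig : (a+1) * (b+1) < N := by rw [hN, hK]; omega
      have hbig2 : a * (b+1) < N := by nlinarith
      have hbig3 : (a+1) * b < K := by nlinarith
      rw [Bgf_eq_sum (a+1) (b+1) N hbig]
      have hsplit : ∀ n, ((Bcard (a+1) (b+1) n : ℝ)) * q ^ n =
          (Bcard a (b+1) n : ℝ) * q ^ n +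
          (if a + 1 ≤ n then (Bcard (a+1) b (n - (a+1)) : ℝ) else 0) * q ^ n := by
        intro n
        rw [Bcard_rec a b n]
        push_cast
        split_ifs with h <;> ring
      rw [Finset.sum_congr rfl (fun n _ => hsplit n), Finset.sum_add_distrib]
      have e1 : ∑ n ∈ Finset.range N, (Bcard a (b+1) n : ℝ) * q ^ n = Bgf q a (b+1) :=
        (Bgf_eq_sum a (b+1) N hbig2).symm
      have e2 : ∑ n ∈ Finset.range N,
          (if a + 1 ≤ n then (Bcard (a+1) b (n - (a+1)) : ℝ) else 0) * q ^ n =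
          q ^ (a+1) * Bgf q (a+1) b := by
        rw [hN, Finset.sum_range_add]
        have z1 : ∀ x ∈ Finset.range (a+1),
            (if a + 1 ≤ x then (Bcard (a+1) b (x - (a+1)) : ℝ) else 0) * q ^ x = 0 := by
          intro x hx
          rw [if_neg (by simp at hx; omega)]; ring
        rw [Finset.sum_congr rfl z1, Finset.sum_const_zero, zero_add]
        have z2 : ∀ x ∈ Finset.range K,
            (if a + 1 ≤ a + 1 + x then (Bcard (a+1) b (a + 1 + x - (a+1)) : ℝ) else 0)
              * q ^ (a + 1 + x) =
            q ^ (a+1) * ((Bcard (a+1) b x : ℝ) * q ^ x) := by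
          intro x _
          rw [if_pos (by omega), show a + 1 + x - (a+1) = x by omega, pow_add]
          ring
        rw [Finset.sum_congr rfl z2, ← Finset.mul_sum, ← Bgf_eq_sum (a+1) b K hbig3]
      rw [e1, e2, ih (a+1), ih2]
      have hp := pascal2 hq (a + b + 1) b
      rw [show a + b + 1 - b = a + 1 by omega] at hp
      rw [show a + 1 + (b + 1) = a + b + 1 + 1 by omega, hp,
        show a + (b + 1) = a + b + 1 by omega, show a + 1 + b = a + b + 1 by omega]

open Finset

noncomputable def Agf (q : ℝ) (m L : ℕ) : ℝ :=
  ∑' n : ℕ, (Acard (m : ℤ) (L : ℤ) (n+1) : ℝ) * q ^ (n+1)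

lemma Agf_eq_sum {q : ℝ} (m L N : ℕ) (h : L * L < N) :
    Agf q m L = ∑ n ∈ Finset.range N, (Acard (m : ℤ) (L : ℤ) (n+1) : ℝ) * q ^ (n+1) := by
  apply tsum_eq_sum
  intro b hb
  have hN : N ≤ b := by
    by_contra hc
    exact hb (Finset.mem_range.2 (by omega))
  rw [Acard_vanish m L (b+1) (by omega)]
  simp

lemma Agf_zero {q : ℝ} (m L : ℕ) (h : L ≤ m) : Agf q m L = 0 := by
  have hz : ∀ n : ℕ, Acard (m : ℤ) (L : ℤ) (n+1) = 0 := fun n =>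
    Acard_zero_of_le _ _ _ (by exact_mod_cast h) (by omega)
  rw [Agf]
  simp [hz]

lemma Agf_step {q : ℝ} (hq : |q| < 1) (m L : ℕ) :
    Agf q m (L+1) = Agf q m L +
      (if m + 1 ≤ L + 1 then q ^ (L+1) * Bgf q (L+1) (L - m) else 0) := by
  by_cases hm : m + 1 ≤ L + 1
  swap
  · rw [if_neg hm, add_zero]
    have hz : ∀ n : ℕ, Acard (m : ℤ) ((L+1 : ℕ) : ℤ) (n+1) = Acard (m:ℤ) (L:ℤ) (n+1) := by
      intro n
      rw [Acard_succ m L (n+1), if_neg (by omega), Nat.add_zero]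
    rw [Agf, Agf]
    exact tsum_congr fun n => by rw [hz n]
  rw [if_pos hm]
  set K := (L+1) * (L+1) + 1 with hK
  set N := L + K with hN
  have hb1 : (L+1) * (L+1) < N := by omega
  have hb2 : L * L < N := by nlinarith
  have hb3 : (L+1) * (L - m) < K := by nlinarith [Nat.sub_le L m]
  rw [Agf_eq_sum m (L+1) N hb1, Agf_eq_sum m L N hb2]
  have hsplit : ∀ n : ℕ, ((Acard (m:ℤ) ((L+1:ℕ):ℤ) (n+1) : ℝ)) * q ^ (n+1) =
      (Acard (m:ℤ) (L:ℤ) (n+1) : ℝ) * q ^ (n+1) +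
      (if L ≤ n then (Bcard (L+1) (L-m) (n - L) : ℝ) else 0) * q ^ (n+1) := by
    intro n
    rw [Acard_succ m L (n+1)]
    rw [show n + 1 - (L+1) = n - L by omega]
    push_cast
    simp only [show (m ≤ L ∧ L ≤ n) ↔ (L ≤ n) from ⟨fun h => h.2, fun h => ⟨by omega, h⟩⟩]
    split_ifs <;> ring
  rw [Finset.sum_congr rfl (fun n _ => hsplit n), Finset.sum_add_distrib]
  congr 1
  rw [hN, Finset.sum_range_add]
  have z1 : ∀ x ∈ Finset.range L,
      (if L ≤ x then (Bcard (L+1) (L-m) (x - L) : ℝ) else 0) * q ^ (x+1) = 0 := by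
    intro x hx
    rw [if_neg (by simp at hx; omega)]; ring
  rw [Finset.sum_congr rfl z1, Finset.sum_const_zero, zero_add]
  have z2 : ∀ x ∈ Finset.range K,
      (if L ≤ L + x then (Bcard (L+1) (L-m) (L + x - L) : ℝ) else 0) * q ^ (L + x + 1) =
      q ^ (L+1) * ((Bcard (L+1) (L-m) x : ℝ) * q ^ x) := by
    intro x _
    rw [if_pos (by omega), show L + x - L = x by omega,
      show L + x + 1 = (L + 1) + x by omega, pow_add]
    ring
  rw [Finset.sum_congr rfl z2, ← Finset.mul_sum, ← Bgf_eq_sum (L+1) (L-m) K hb3]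

lemma star {q : ℝ} (hq : |q| < 1) (m t : ℕ) :
    q ^ (m+t+1) * qb q (m+2*t+1) (m+t+1) + q ^ (2*m+t+3) * qb q (m+2*t) (m+t+2)
      = q ^ (m+1) * (qb q (m+2*t+2) (m+t+2) - qb q (m+2*t) (m+t+1)) := by
  have hp2 := pascal2 hq (m+2*t+1) (m+t+1)
  rw [show m+2*t+1 - (m+t+1) = t by omega] at hp2
  have hp1 := pascal1 hq (m+2*t) (m+t+1)
  rw [show m+2*t+2 = m+2*t+1+1 by omega, show m+t+2 = m+t+1+1 by omega, hp2, hp1]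
  rw [show m+t+1 = m + 1 + t by omega, show 2*m+t+3 = (m+1) + (m+1+t+1) by omega,
    pow_add, pow_add, pow_add]
  ring

lemma main_ind {q : ℝ} (hq : |q| < 1) (m t : ℕ) :
    Agf q m (m + t) + q ^ (m+1) * Agf q (m+3) (m + t + 1) =
      q ^ (m+1) * qb q (m + 2*t) (m + t + 1) := by
  induction t with
  | zero =>
    rw [Agf_zero m (m+0) (by omega), Agf_zero (m+3) (m+0+1) (by omega),
      qb_of_gt (by omega)]
    ring
  | succ t iht =>
    have s1 := Agf_step hq m (m+t)
    rw [if_pos (by omega), show m + t - m = t by omega, Bgf_eq_qb hq,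
      show m+t+1+t = m+2*t+1 by omega,
      qb_symm hq (show t ≤ m+2*t+1 by omega), show m+2*t+1-t = m+t+1 by omega] at s1
    have s2 := Agf_step hq (m+3) (m+t+1)
    have e2 : (if m + 3 + 1 ≤ m + t + 1 + 1 then
        q ^ (m+t+1+1) * Bgf q (m+t+1+1) (m+t+1 - (m+3)) else 0) =
        q ^ (m+t+2) * qb q (m+2*t) (m+t+2) := by
      split_ifs with h
      · rw [show m+t+1 - (m+3) = t-2 by omega, Bgf_eq_qb hq,
          show m+t+1+1+(t-2) = m+2*t by omega,
          qb_symm hq (show t-2 ≤ m+2*t by omega), show m+2*t-(t-2) = m+t+2 by omega,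
          show m+t+1+1 = m+t+2 by omega]
      · rw [qb_of_gt (by omega), mul_zero]
    rw [e2] at s2
    rw [show m + (t+1) = m + t + 1 by omega, show m + 2*(t+1) = m+2*t+2 by omega,
      show m + t + 1 + 1 = m + t + 2 by omega] at *
    rw [s1, s2]
    have hstar := star hq m t
    linear_combination iht + hstar

lemma qbinom_natCast (q : ℝ) (a b : ℕ) : qbinom q (a : ℤ) (b : ℤ) = qb q a b := by
  rw [qbinom, qb]
  by_cases h : b ≤ a
  · have h1 : ((a:ℤ)).toNat = a := Int.toNat_natCast a
    have h2 : ((b:ℤ)).toNat = b := Int.toNat_natCast b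
    have h3 : ((a:ℤ) - (b:ℤ)).toNat = a - b := by omega
    rw [if_pos ⟨Int.natCast_nonneg b, by exact_mod_cast h⟩, if_pos h, h1, h2, h3]
  · rw [if_neg (fun hc => h (by exact_mod_cast hc.2)), if_neg h]

lemma QL_eq_tsum (q : ℝ) (m L : ℤ) :
    QL q m L = ∑' n : ℕ, (Acard m L (n+1) : ℝ) * q ^ (n+1) := rfl

end Aux

/-- for m ≥ 0,
`Q_m^L(q) + q^{m+1} Q_{m+3}^{L+1}(q) = q^{m+1} · qbinom(2L-m, L+1)`. -/
theorem stmt10 (q : ℝ) (hq : |q| < 1) (m : ℕ) (L : ℤ) :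
    QL q m L + q ^ (m + 1) * QL q (m + 3) (L + 1) =
      q ^ (m + 1) * qbinom q (2 * L - m) (L + 1) := by
  rcases le_or_gt (m : ℤ) L with hL | hL
  · obtain ⟨t, rfl⟩ : ∃ t : ℕ, L = (m : ℤ) + t := ⟨(L - m).toNat, by omega⟩
    have b1 : QL q (m : ℤ) ((m : ℤ) + t) = Agf q m (m + t) := by
      rw [show (m:ℤ) + t = ((m + t : ℕ) : ℤ) by push_cast; ring]; rfl
    have b2 : QL q ((m : ℤ) + 3) (((m : ℤ) + t) + 1) = Agf q (m+3) (m + t + 1) := by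
      rw [show (m:ℤ) + t + 1 = ((m + t + 1 : ℕ) : ℤ) by push_cast; ring,
        show (m:ℤ) + 3 = ((m + 3 : ℕ) : ℤ) by push_cast; ring]; rfl
    have b3 : qbinom q (2 * ((m:ℤ) + t) - m) (((m:ℤ) + t) + 1) = qb q (m + 2*t) (m + t + 1) := by
      rw [show 2 * ((m:ℤ) + t) - m = ((m + 2*t : ℕ) : ℤ) by push_cast; ring,
        show (m:ℤ) + t + 1 = ((m + t + 1 : ℕ) : ℤ) by push_cast; ring, qbinom_natCast]
    rw [b1, b2, b3]
    exact main_ind hq m t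
  · have z1 : QL q (m : ℤ) L = 0 := by
      have hz : ∀ n : ℕ, Acard (m : ℤ) L (n+1) = 0 := fun n =>
        Acard_zero_of_le _ _ _ (by omega) (by omega)
      rw [QL_eq_tsum]
      simp [hz]
    have z2 : QL q ((m : ℤ) + 3) (L + 1) = 0 := by
      have hz : ∀ n : ℕ, Acard ((m : ℤ) + 3) (L + 1) (n+1) = 0 := fun n =>
        Acard_zero_of_le _ _ _ (by omega) (by omega)
      rw [QL_eq_tsum]
      simp [hz]
    have z3 : qbinom q (2 * L - m) (L + 1) = 0 := by
      rw [qbinom, if_neg (by omega)]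
    rw [z1, z2, z3]
    ring


end Dyson
end
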